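/- Let B = ℂ[x,y,z]/⟨z − x^k y⟩ and let φ : ℂ[X₁,X₂,Y] → B be given by X₁ ↦ x, X₂ ↦ y² + xz, Y ↦ z. Then B is generated as a module over ℂ[X₁,X₂] (acting through φ restricted to X₁, X₂) by the classes of 1 and y, and the matrix Λ = [[Y, −X₁^k], [−X₁^k X₂, Y + X₁^{2k+1}]] satisfies the Mond–Pellikaan relations: φ(Y)·1 = φ(X₁^k)·y and φ(Y)·y = φ(X₁^k X₂)·1 − φ(X₁^{2k+1})·y in B. -/
import Mathlib


open MvPolynomial

set_option maxHeartbeats 1000000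

/-- The ideal `⟨z − xᵏy⟩` in `ℂ[x,y,z]` (variables `0 ↦ x`, `1 ↦ y`, `2 ↦ z`). -/
noncomputable def Ik (k : ℕ) : Ideal (MvPolynomial (Fin 3) ℂ) :=
  Ideal.span {X 2 - X 0 ^ k * X 1}

/-- `B = ℂ[x,y,z]/⟨z − xᵏy⟩`, and `φ : ℂ[X₁,X₂,Y] → B` with `X₁ ↦ x`,
`X₂ ↦ y² + xz`, `Y ↦ z`: then `B` is generated by the classes of `1, y` as a module
over `ℂ[X₁,X₂]`, and the matrix `Λ = [[Y, −X₁ᵏ], [−X₁ᵏX₂, Y + X₁^{2k+1}]]` satisfies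
the Mond–Pellikaan relations `φ(Y)·1 = φ(X₁ᵏ)·y` and
`φ(Y)·y = φ(X₁ᵏX₂)·1 − φ(X₁^{2k+1})·y`. -/
theorem mp_matrix_relations (k : ℕ) (hk : 1 ≤ k) :
    let π := Ideal.Quotient.mk (Ik k)
    let φ : MvPolynomial (Fin 3) ℂ →ₐ[ℂ] (MvPolynomial (Fin 3) ℂ ⧸ Ik k) :=
      MvPolynomial.aeval ![π (X 0), π (X 1 ^ 2 + X 0 * X 2), π (X 2)]
    (∀ b : MvPolynomial (Fin 3) ℂ ⧸ Ik k, ∃ p q : MvPolynomial (Fin 2) ℂ,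
      b = MvPolynomial.aeval ![π (X 0), π (X 1 ^ 2 + X 0 * X 2)] p * 1 +
          MvPolynomial.aeval ![π (X 0), π (X 1 ^ 2 + X 0 * X 2)] q * π (X 1)) ∧
    φ (X 2) * 1 = φ (X 0 ^ k) * π (X 1) ∧
    φ (X 2) * π (X 1) = φ (X 0 ^ k * X 1) * 1 - φ (X 0 ^ (2 * k + 1)) * π (X 1) := by
  intro π φ
  set v : Fin 2 → (MvPolynomial (Fin 3) ℂ ⧸ Ik k) :=
    ![π (X 0), π (X 1 ^ 2 + X 0 * X 2)] with hv
  have h2 : π (X 2) = π (X 0) ^ k * π (X 1) := by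
    rw [← map_pow, ← map_mul, Ideal.Quotient.eq]
    exact Ideal.subset_span rfl
  have hv0 : aeval v (X 0 : MvPolynomial (Fin 2) ℂ) = π (X 0) := by simp [hv]
  have hv1 : aeval v (X 1 : MvPolynomial (Fin 2) ℂ)
      = π (X 1) ^ 2 + π (X 0) ^ (k + 1) * π (X 1) := by
    simp [hv, h2]; ring
  have hφ0 : φ (X 0) = π (X 0) := by simp [φ]
  have hφ2 : φ (X 2) = π (X 2) := by simp [φ]
  refine ⟨?_, ?_, ?_⟩
  · intro b
    obtain ⟨f, rfl⟩ := Ideal.Quotient.mk_surjective b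
    induction f using MvPolynomial.induction_on with
    | C a =>
      exact ⟨C a, 0, by simp [← Ideal.Quotient.mk_algebraMap, MvPolynomial.algebraMap_eq]⟩
    | add f g hf hg =>
      obtain ⟨p, q, hp⟩ := hf; obtain ⟨p', q', hq⟩ := hg
      refine ⟨p + p', q + q', ?_⟩
      rw [map_add, hp, hq, map_add, map_add]; ring
    | mul_X f i hf =>
      obtain ⟨p, q, hp⟩ := hf
      fin_cases i <;> simp only [Fin.zero_eta, Fin.mk_one, Fin.reduceFinMk]
      · refine ⟨X 0 * p, X 0 * q, ?_⟩
        rw [map_mul, hp, map_mul, map_mul, hv0]; ring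
      · refine ⟨X 1 * q, p - X 0 ^ (k + 1) * q, ?_⟩
        rw [map_mul, hp, map_mul, map_sub, map_mul, map_pow, hv0, hv1]; ring
      · refine ⟨X 0 ^ k * X 1 * q, X 0 ^ k * p - X 0 ^ (2 * k + 1) * q, ?_⟩
        rw [map_mul, hp, h2, map_mul, map_mul, map_pow, map_sub, map_mul,
          map_mul, map_pow, map_pow, hv0, hv1]; ring
  · rw [hφ2, h2, map_pow, hφ0]; ring
  · rw [hφ2, h2, map_mul, map_pow, hφ0]
    have hφ1 : φ (X 1) = π (X 1) ^ 2 + π (X 0) ^ (k + 1) * π (X 1) := by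
      simp [φ, h2]; ring
    rw [hφ1, map_pow, hφ0]; ring
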